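/- Let G be a finite primitive subgroup of U(ℂ^d) and let H be a normal subgroup of G. Then the centre Z(H) of H is contained in Z_d = {λ·I_d : λ ∈ ℂ, |λ| = 1}. -/

import Mathlib

open scoped InnerProductSpace



/-- A generalized eigenvector of a finite-order endomorphism is an eigenvector. -/
lemma aux_finiteOrder_genEig {M : Type*} [AddCommGroup M] [Module ℂ M]
    (f : Module.End ℂ M) (n : ℕ) (hn : 0 < n) (hf : f ^ n = 1)
    (c : ℂ) : ∀ (k : ℕ) (v : M), (((f - c • 1) ^ k : Module.End ℂ M)) v = 0 → f v = c • v := by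
  set T : Module.End ℂ M := f - c • 1 with hT
  have hTv : ∀ v : M, T v = f v - c • v := by
    intro v; simp [hT, LinearMap.sub_apply, LinearMap.smul_apply, Module.End.one_apply]
  have key : ∀ v : M, (T ^ 2 : Module.End ℂ M) v = 0 → T v = 0 := by
    intro v hv
    set w : M := T v with hw
    have hfv : f v = c • v + w := by rw [hw, hTv v]; abel
    have hfw : f w = c • w := by
      have h0 : T w = 0 := by rw [hw, ← Module.End.mul_apply, ← pow_two]; exact hv
      rw [hTv w, sub_eq_zero] at h0; exact h0
    by_cases hw0 : w = 0
    · rw [hw]; exact hw0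
    · exfalso
      have hfmw : ∀ m : ℕ, (f ^ m) w = (c ^ m) • w := by
        intro m
        induction m with
        | zero => simp
        | succ m ih =>
            rw [pow_succ, Module.End.mul_apply, hfw, map_smul, ih, smul_smul, ← pow_succ']
      have hcn : c ^ n = 1 := by
        have h1 : (c ^ n) • w = w := by
          have := hfmw n; rw [hf, Module.End.one_apply] at this; exact this.symm
        have h2 : (c ^ n - 1) • w = 0 := by rw [sub_smul, one_smul, h1, sub_self]
        rcases smul_eq_zero.mp h2 with h | h
        · exact sub_eq_zero.mp h
        · exact absurd h hw0
      have hc0 : c ≠ 0 := by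
        intro h; rw [h, zero_pow hn.ne'] at hcn; exact zero_ne_one hcn
      -- f^m v = c^m • v + (m * c^(m-1)) • w
      have hfmv : ∀ m : ℕ, (f ^ m) v = (c ^ m) • v + ((m : ℂ) * c ^ (m - 1)) • w := by
        intro m
        induction m with
        | zero => simp
        | succ m ih =>
            have hcoef : (m : ℂ) * c ^ (m - 1) * c = (m : ℂ) * c ^ m := by
              rcases Nat.eq_zero_or_pos m with rfl | hm
              · simp
              · rw [mul_assoc, ← pow_succ, Nat.sub_add_cancel hm]
            rw [pow_succ, Module.End.mul_apply, hfv, map_add, map_smul, ih, hfmw m]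
            rw [smul_add, smul_smul, smul_smul, Nat.add_sub_cancel]
            rw [mul_comm c ((m : ℂ) * c ^ (m - 1)), hcoef, ← pow_succ']
            rw [add_assoc, ← add_smul]
            congr 1
            push_cast
            ring
      have h3 : v = (c ^ n) • v + ((n : ℂ) * c ^ (n - 1)) • w := by
        have := hfmv n; rwa [hf, Module.End.one_apply] at this
      rw [hcn, one_smul] at h3
      have h4 : ((n : ℂ) * c ^ (n - 1)) • w = 0 := by
        have := h3; nth_rewrite 1 [← add_zero v] at this
        exact (add_left_cancel this).symm
      rcases smul_eq_zero.mp h4 with h | h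
      · rcases mul_eq_zero.mp h with h' | h'
        · exact absurd h' (Nat.cast_ne_zero.mpr hn.ne')
        · exact (pow_ne_zero _ hc0) h'
      · exact hw0 h
  -- now induction on k
  have key2 : ∀ (k : ℕ) (v : M), (T ^ k : Module.End ℂ M) v = 0 → T v = 0 := by
    intro k
    induction k with
    | zero => intro v hv; simp at hv; simp [hv]
    | succ k ih =>
        intro v hv
        have h1 : (T ^ k : Module.End ℂ M) (T v) = 0 := by
          rw [← Module.End.mul_apply, ← pow_succ]; exact hv
        have h2 : T (T v) = 0 := ih (T v) h1
        have h3 : (T ^ 2 : Module.End ℂ M) v = 0 := by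
          rw [pow_two, Module.End.mul_apply]; exact h2
        exact key v h3
  intro k v hv
  have := key2 k v hv
  rw [hTv v, sub_eq_zero] at this; exact this


noncomputable def uEnd (d : ℕ) :
    (EuclideanSpace ℂ (Fin d) ≃ₗᵢ[ℂ] EuclideanSpace ℂ (Fin d)) →*
      Module.End ℂ (EuclideanSpace ℂ (Fin d)) where
  toFun u := u.toLinearEquiv.toLinearMap
  map_one' := rfl
  map_mul' _ _ := rfl

lemma uEnd_apply {d : ℕ} (u : EuclideanSpace ℂ (Fin d) ≃ₗᵢ[ℂ] EuclideanSpace ℂ (Fin d))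
    (v : EuclideanSpace ℂ (Fin d)) : uEnd d u v = u v := rfl

lemma uEnd_injective {d : ℕ} (u : EuclideanSpace ℂ (Fin d) ≃ₗᵢ[ℂ] EuclideanSpace ℂ (Fin d)) :
    Function.Injective (uEnd d u) := u.injective

lemma uEnd_semiconj {d : ℕ} (g x : EuclideanSpace ℂ (Fin d) ≃ₗᵢ[ℂ] EuclideanSpace ℂ (Fin d))
    (μ : ℂ) :
    SemiconjBy (uEnd d g) (uEnd d x - μ • 1) (uEnd d (g * x * g⁻¹) - μ • 1) := by
  show uEnd d g * (uEnd d x - μ • 1) = (uEnd d (g * x * g⁻¹) - μ • 1) * uEnd d g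
  rw [mul_sub, sub_mul, ← map_mul, ← map_mul, inv_mul_cancel_right, mul_smul_comm,
    smul_mul_assoc, mul_one, one_mul]

lemma uEnd_map_maxGen_le {d : ℕ}
    (g x : EuclideanSpace ℂ (Fin d) ≃ₗᵢ[ℂ] EuclideanSpace ℂ (Fin d)) (μ : ℂ) :
    Submodule.map (uEnd d g) ((uEnd d x).maxGenEigenspace μ) ≤
      (uEnd d (g * x * g⁻¹)).maxGenEigenspace μ := by
  rintro m ⟨v, hv, rfl⟩
  rw [SetLike.mem_coe] at hv
  rw [Module.End.mem_maxGenEigenspace] at hv ⊢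
  obtain ⟨k, hk⟩ := hv
  refine ⟨k, ?_⟩
  have hsc := (uEnd_semiconj g x μ).pow_right k
  have : ((uEnd d (g * x * g⁻¹) - μ • 1) ^ k) ((uEnd d g) v)
      = (uEnd d g) (((uEnd d x - μ • 1) ^ k) v) := by
    rw [← Module.End.mul_apply, ← hsc.eq, Module.End.mul_apply]
  rw [this, hk, map_zero]

lemma uEnd_map_maxGen {d : ℕ}
    (g x : EuclideanSpace ℂ (Fin d) ≃ₗᵢ[ℂ] EuclideanSpace ℂ (Fin d)) (μ : ℂ) :
    Submodule.map (uEnd d g) ((uEnd d x).maxGenEigenspace μ) =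
      (uEnd d (g * x * g⁻¹)).maxGenEigenspace μ := by
  refine le_antisymm (uEnd_map_maxGen_le g x μ) ?_
  intro v hv
  refine ⟨(uEnd d g⁻¹) v, ?_, ?_⟩
  · have := uEnd_map_maxGen_le g⁻¹ (g * x * g⁻¹) μ
    have h2 : g⁻¹ * (g * x * g⁻¹) * g⁻¹⁻¹ = x := by group
    rw [h2] at this
    exact this ⟨v, hv, rfl⟩
  · rw [← Module.End.mul_apply, ← map_mul, mul_inv_cancel, map_one, Module.End.one_apply]

def conjSetEquiv {α : Type*} [Group α] (S : Set α) (g : α)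
    (h1 : ∀ x : S, g * x.1 * g⁻¹ ∈ S) (h2 : ∀ x : S, g⁻¹ * x.1 * g ∈ S) : S ≃ S where
  toFun x := ⟨g * x.1 * g⁻¹, h1 x⟩
  invFun x := ⟨g⁻¹ * x.1 * g, h2 x⟩
  left_inv x := Subtype.ext (by show g⁻¹ * (g * x.1 * g⁻¹) * g = x.1; group)
  right_inv x := Subtype.ext (by show g * (g⁻¹ * x.1 * g) * g⁻¹ = x.1; group)

@[simp] lemma conjSetEquiv_coe {α : Type*} [Group α] (S : Set α) (g : α)
    (h1 : ∀ x : S, g * x.1 * g⁻¹ ∈ S) (h2 : ∀ x : S, g⁻¹ * x.1 * g ∈ S) (x : S) :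
    (conjSetEquiv S g h1 h2 x).1 = g * x.1 * g⁻¹ := rfl

/-- A subgroup of the unitary group of `ℂ^d` is imprimitive if there is a nontrivial direct sum
decomposition of `ℂ^d` whose summands are permuted by the group. -/
def IsImprimitive (d : ℕ)
    (G : Subgroup (EuclideanSpace ℂ (Fin d) ≃ₗᵢ[ℂ] EuclideanSpace ℂ (Fin d))) : Prop :=
  ∃ (k : ℕ) (V : Fin k → Submodule ℂ (EuclideanSpace ℂ (Fin d))),
    DirectSum.IsInternal V ∧
    (∀ i, 0 < Module.finrank ℂ (V i) ∧ Module.finrank ℂ (V i) < d) ∧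
    (∀ g ∈ G, ∀ i, ∃ j,
      (g : EuclideanSpace ℂ (Fin d) ≃ₗᵢ[ℂ] EuclideanSpace ℂ (Fin d)) '' (V i) = V j)

set_option maxHeartbeats 1000000 in
theorem centre_of_normal_subgroup_of_primitive_is_scalar (d : ℕ)
    (G : Subgroup (EuclideanSpace ℂ (Fin d) ≃ₗᵢ[ℂ] EuclideanSpace ℂ (Fin d)))
    (hG : Finite G) (hprim : ¬ IsImprimitive d G)
    (H : Subgroup (EuclideanSpace ℂ (Fin d) ≃ₗᵢ[ℂ] EuclideanSpace ℂ (Fin d)))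
    (hHG : H ≤ G)
    (hHnormal : ∀ g ∈ G, ∀ x ∈ H, g * x * g⁻¹ ∈ H) :
    ∀ h ∈ H, (∀ k ∈ H, h * k = k * h) →
      ∃ c : ℂ, ‖c‖ = 1 ∧
        ∀ v : EuclideanSpace ℂ (Fin d), h v = c • v := by
  intro h hh hcomm
  rcases Nat.eq_zero_or_pos d with rfl | hd
  · exact ⟨1, norm_one, fun v => Subsingleton.elim _ _⟩
  haveI : Nonempty (Fin d) := ⟨⟨0, hd⟩⟩
  set π := uEnd d with hπ
  set S : Set (EuclideanSpace ℂ (Fin d) ≃ₗᵢ[ℂ] EuclideanSpace ℂ (Fin d)) :=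
    {x | x ∈ H ∧ ∀ y ∈ H, x * y = y * x} with hSdef
  have hhS : h ∈ S := ⟨hh, hcomm⟩
  haveI : Nonempty S := ⟨⟨h, hhS⟩⟩
  have hconj : ∀ g ∈ G, ∀ x ∈ S, g * x * g⁻¹ ∈ S := by
    intro g hg x hx
    refine ⟨hHnormal g hg x hx.1, fun y hy => ?_⟩
    have h1 : g⁻¹ * y * g ∈ H := by
      have := hHnormal g⁻¹ (inv_mem hg) y hy
      rwa [inv_inv] at this
    have h2 : x * (g⁻¹ * y * g) = (g⁻¹ * y * g) * x := hx.2 _ h1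
    calc g * x * g⁻¹ * y = g * (x * (g⁻¹ * y * g)) * g⁻¹ := by group
    _ = g * ((g⁻¹ * y * g) * x) * g⁻¹ := by rw [h2]
    _ = y * (g * x * g⁻¹) := by group
  set f : S → Module.End ℂ (EuclideanSpace ℂ (Fin d)) := fun x => π x with hf
  have hcommf : ∀ i j : S, Commute (f i) (f j) := by
    intro x y
    have hxy : (x : EuclideanSpace ℂ (Fin d) ≃ₗᵢ[ℂ] EuclideanSpace ℂ (Fin d)) * y = y * x :=
      x.2.2 y y.2.1
    show π x * π y = π y * π x
    rw [← map_mul, ← map_mul, hxy]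
  set W : (S → ℂ) → Submodule ℂ (EuclideanSpace ℂ (Fin d)) :=
    fun χ => ⨅ i : S, (f i).maxGenEigenspace (χ i) with hW
  have hsup : ⨆ χ : S → ℂ, W χ = ⊤ :=
    Module.End.iSup_iInf_maxGenEigenspace_eq_top_of_iSup_maxGenEigenspace_eq_top_of_commute f
      (fun i j _ => hcommf i j) (fun i => Module.End.iSup_maxGenEigenspace_eq_top _)
  have hind : iSupIndep W :=
    Module.End.independent_iInf_maxGenEigenspace_of_forall_mapsTo f
      (fun i j φ => Module.End.mapsTo_maxGenEigenspace_of_comm (hcommf j i) φ)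
  -- conjugation action on simultaneous eigenspaces
  have hconjS : ∀ g, g ∈ G → ∀ x : S, (g⁻¹ * (x : EuclideanSpace ℂ (Fin d) ≃ₗᵢ[ℂ] EuclideanSpace ℂ (Fin d)) * g) ∈ S := by
    intro g hg x
    have := hconj g⁻¹ (inv_mem hg) x x.2
    rwa [inv_inv] at this
  have key : ∀ g, (hg : g ∈ G) → ∀ χ : S → ℂ,
      Submodule.map (π g) (W χ) = W (fun x => χ ⟨g⁻¹ * x.1 * g, hconjS g hg x⟩) := by
    intro g hg χ
    rw [hW]
    rw [Submodule.map_iInf (π g) g.injective]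
    have step1 : ∀ x : S, Submodule.map (π g) ((f x).maxGenEigenspace (χ x)) =
        (π (g * x.1 * g⁻¹)).maxGenEigenspace (χ x) := fun x => uEnd_map_maxGen g x.1 (χ x)
    refine (iInf_congr step1).trans
      ((conjSetEquiv S g (fun x => hconj g hg x x.2) (hconjS g hg)).iInf_congr (fun x => ?_))
    simp only [hf, conjSetEquiv_coe]
    congr 1
    exact congrArg χ (Subtype.ext (by show g⁻¹ * (g * x.1 * g⁻¹) * g = x.1; group))
  -- the set of simultaneous eigenvalues
  set T : Set (S → ℂ) := {χ | W χ ≠ ⊥} with hT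
  have hTfin : T.Finite := WellFoundedGT.finite_ne_bot_of_iSupIndep hind
  have hTne : T.Nonempty := by
    by_contra hc
    rw [Set.not_nonempty_iff_eq_empty] at hc
    have : ∀ χ : S → ℂ, W χ = ⊥ := by
      intro χ
      by_contra hb
      exact absurd (Set.eq_empty_iff_forall_notMem.mp hc χ) (fun hn => hn hb)
    rw [iSup_congr this, iSup_const] at hsup
    exact absurd hsup bot_ne_top
  by_cases hone : ∀ χ₁ ∈ T, ∀ χ₂ ∈ T, χ₁ = χ₂
  · -- unique simultaneous eigenvalue: h is scalar
    obtain ⟨χ₀, hχ₀⟩ := hTne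
    have htop : W χ₀ = ⊤ := by
      refine le_antisymm le_top ?_
      rw [← hsup]
      refine iSup_le fun χ => ?_
      by_cases hb : W χ = ⊥
      · rw [hb]; exact bot_le
      · rw [hone χ hb χ₀ hχ₀]
    set c := χ₀ ⟨h, hhS⟩ with hc
    have hn : 0 < Nat.card G := Nat.card_pos
    have hfo : (π h) ^ Nat.card G = 1 := by
      have h1 : (⟨h, hHG hh⟩ : G) ^ Nat.card G = 1 := pow_card_eq_one'
      have h2 : h ^ Nat.card G = 1 := by
        have h3 := congrArg (Subtype.val) h1
        rwa [SubmonoidClass.coe_pow, OneMemClass.coe_one] at h3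
      rw [← map_pow, h2, map_one]
    have heig : ∀ v, π h v = c • v := by
      intro v
      have hle : W χ₀ ≤ (f ⟨h, hhS⟩).maxGenEigenspace c := by
        rw [hW, hc]; exact iInf_le _ _
      have hv2 : v ∈ (f ⟨h, hhS⟩).maxGenEigenspace c := hle (by rw [htop]; trivial)
      rw [Module.End.mem_maxGenEigenspace] at hv2
      obtain ⟨k, hk⟩ := hv2
      exact aux_finiteOrder_genEig (π h) _ hn hfo c k v hk
    refine ⟨c, ?_, fun v => heig v⟩
    set v₀ : EuclideanSpace ℂ (Fin d) := EuclideanSpace.single ⟨0, hd⟩ 1 with hv₀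
    have hv₀norm : ‖v₀‖ = 1 := by rw [hv₀, EuclideanSpace.norm_single, norm_one]
    have h1 : ‖h v₀‖ = ‖v₀‖ := h.norm_map v₀
    have h2 : h v₀ = c • v₀ := heig v₀
    rw [h2, norm_smul, hv₀norm, mul_one] at h1
    exact h1
  · -- at least two simultaneous eigenvalues: imprimitivity
    push_neg at hone
    obtain ⟨χ₁, hχ₁, χ₂, hχ₂, hne12⟩ := hone
    exfalso
    apply hprim
    haveI : Fintype T := hTfin.fintype
    set e0 := Fintype.equivFin T with he0
    refine ⟨Fintype.card T, fun i => W ((e0.symm i) : (S → ℂ)), ?_, ?_, ?_⟩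
    · rw [DirectSum.isInternal_submodule_iff_iSupIndep_and_iSup_eq_top]
      constructor
      · exact hind.comp (Subtype.val_injective.comp e0.symm.injective)
      · refine le_antisymm le_top ?_
        rw [← hsup]
        refine iSup_le fun χ => ?_
        by_cases hb : W χ = ⊥
        · rw [hb]; exact bot_le
        · exact le_iSup_of_le (e0 ⟨χ, hb⟩) (le_of_eq (by rw [Equiv.symm_apply_apply]))
    · intro i
      have hχT : W ((e0.symm i) : (S → ℂ)) ≠ ⊥ := (e0.symm i).2
      constructor
      · exact Module.finrank_pos_iff.mpr (Submodule.nontrivial_iff_ne_bot.mpr hχT)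
      · have hnetop : W ((e0.symm i) : (S → ℂ)) ≠ ⊤ := by
          intro htop
          obtain ⟨χ', hχ'T, hχ'ne⟩ : ∃ χ', χ' ∈ T ∧ χ' ≠ ((e0.symm i) : (S → ℂ)) := by
            by_cases h1 : χ₁ = ((e0.symm i) : (S → ℂ))
            · exact ⟨χ₂, hχ₂, fun hcontra => hne12 (h1.trans hcontra.symm)⟩
            · exact ⟨χ₁, hχ₁, h1⟩
          have hd' : Disjoint (W ((e0.symm i) : (S → ℂ))) (W χ') :=
            hind.pairwiseDisjoint (fun e => hχ'ne e.symm)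
          rw [htop] at hd'
          exact hχ'T (disjoint_top.mp hd'.symm)
        have := Submodule.finrank_lt hnetop
        rwa [finrank_euclideanSpace_fin] at this
    · intro g hg i
      have hmap := key g hg ((e0.symm i) : (S → ℂ))
      have hne2 : W (fun x => ((e0.symm i) : (S → ℂ)) ⟨g⁻¹ * x.1 * g, hconjS g hg x⟩) ≠ ⊥ := by
        rw [← hmap]
        intro hb
        refine (e0.symm i).2 ?_
        rw [Submodule.eq_bot_iff]
        intro v hv
        have hm : π g v ∈ Submodule.map (π g) (W ((e0.symm i) : (S → ℂ))) :=
          Submodule.mem_map_of_mem hv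
        rw [hb, Submodule.mem_bot] at hm
        exact g.injective (hm.trans (map_zero (π g)).symm)
      refine ⟨e0 ⟨_, hne2⟩, ?_⟩
      have h4 : e0.symm (e0 ⟨_, hne2⟩) = ⟨_, hne2⟩ := e0.symm_apply_apply _
      show ⇑g '' (W ((e0.symm i) : (S → ℂ)) : Set (EuclideanSpace ℂ (Fin d))) =
        (W (((e0.symm (e0 ⟨_, hne2⟩)) : T) : (S → ℂ)) : Set (EuclideanSpace ℂ (Fin d)))
      rw [h4, ← hmap]
      exact (Submodule.map_coe (π g) _).symm
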